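/- Assume the Framework with Ω = 𝔻, the open unit disk. If the backward shift is contractive, i.e. ‖Q₀‖ ≤ 1, then for every f ∈ H ∖ {0} the S-inner function J := f − P_{[zf]} f has no extra zeros: for every w ∈ 𝔻, if (ι J)(w) = 0 then (ι f)(w) = 0. -/

import Mathlib

open scoped ComplexInnerProductSpace

/-- A Hilbert space `H` of analytic functions on a bounded domain `Ω ⊆ ℂ` with `0 ∈ Ω`,
realized by an injective linear map `ι` into functions, satisfying conditions
(P1)–(P4) of Cheng–Mashreghi–Ross, together with its reproducing kernels. -/
structure RKFramework (Ω : Set ℂ) (H : Type*) [NormedAddCommGroup H]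
    [InnerProductSpace ℂ H] [CompleteSpace H] where
  /-- `Ω` is open. -/
  isOpen : IsOpen Ω
  /-- `Ω` is connected. -/
  isConnected : IsConnected Ω
  /-- `Ω` is bounded. -/
  isBounded : Bornology.IsBounded Ω
  /-- `0 ∈ Ω`. -/
  zero_mem : (0 : ℂ) ∈ Ω
  /-- the realization of elements of `H` as functions (only values on `Ω` matter). -/
  ι : H →ₗ[ℂ] (ℂ → ℂ)
  /-- `ι` is injective as a map into functions on `Ω`. -/
  ι_inj : ∀ f g : H, Set.EqOn (ι f) (ι g) Ω → f = g
  /-- each `ι f` is analytic on `Ω`. -/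
  analytic : ∀ f : H, DifferentiableOn ℂ (ι f) Ω
  /-- (P1): point evaluation of every derivative is a bounded functional. -/
  eval_bounded : ∀ w ∈ Ω, ∀ j : ℕ, ∃ C : ℝ, ∀ f : H,
    ‖iteratedDerivWithin j (ι f) Ω w‖ ≤ C * ‖f‖
  /-- (P2): the shift operator `S`. -/
  S : H →L[ℂ] H
  ι_S : ∀ f : H, ∀ z ∈ Ω, ι (S f) z = z * ι f z
  /-- (P3): the monomials `z^j` belong to `H` … -/
  p : ℕ → H
  ι_p : ∀ j : ℕ, ∀ z ∈ Ω, ι (p j) z = z ^ j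
  /-- … and the polynomials are dense in `H`. -/
  span_p : (Submodule.span ℂ (Set.range p)).topologicalClosure = ⊤
  /-- (P4): the difference-quotient operators `Q_w`. -/
  Q : ℂ → H →L[ℂ] H
  ι_Q : ∀ w ∈ Ω, ∀ f : H, ∀ z ∈ Ω, z ≠ w → ι (Q w f) z = (ι f z - ι f w) / (z - w)
  /-- the reproducing kernel `k_w` at `w ∈ Ω` … -/
  k : ℂ → H
  /-- … satisfying `⟪f, k_w⟫ = (ι f)(w)` (with the paper's inner product linear in its
  first slot; Mathlib's inner product is linear in the second slot). -/
  reproducing : ∀ w ∈ Ω, ∀ f : H, ⟪k w, f⟫ = ι f w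

variable {Ω : Set ℂ} {H : Type*} [NormedAddCommGroup H] [InnerProductSpace ℂ H] [CompleteSpace H]

/-- `[zf]`: the closed linear span of `{S^n f : n ≥ 1}`. -/
abbrev RKFramework.zspan (F : RKFramework Ω H) (f : H) : Submodule ℂ H :=
  (Submodule.span ℂ {x | ∃ n : ℕ, 1 ≤ n ∧ x = (F.S ^ n) f}).topologicalClosure

/-- `[f]`: the closed linear span of `{S^n f : n ≥ 0}`. -/
abbrev RKFramework.fullSpan (F : RKFramework Ω H) (f : H) : Submodule ℂ H :=
  (Submodule.span ℂ (Set.range fun n : ℕ => (F.S ^ n) f)).topologicalClosure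

/-- The `S`-inner function `J = f − P_{[zf]} f` associated with `f`. -/
noncomputable def RKFramework.J (F : RKFramework Ω H) (f : H) : H :=
  f - (Submodule.orthogonalProjection (F.zspan f) f : H)

/-!
Suppose `f(w) ≠ 0` but `J(w) = 0`, and put `g := Q_w J`, so that `J = S g - w g`. Since `f(w) ≠ 0`,
the operator `Q_w` corrected by a multiple of `Q_w f` maps `[f]` into itself and agrees with `Q_w`
on functions vanishing at `w`; hence `g ∈ [f]`, `S g ∈ [zf]` and `S g ⟂ J`. Pythagoras gives
`‖S g‖² + ‖J‖² = |w|² ‖g‖²`, while `Q₀ S = 1` and `‖Q₀‖ ≤ 1` give `‖g‖ ≤ ‖S g‖`, so `J = 0`.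
Then `f ∈ [zf]`, which forces `f = S^n g_n` with `‖g_n‖ ≤ ‖f‖` for every `n`, so that
`|f(z)| ≤ |z|^n ‖k_z‖ ‖f‖ → 0` and `f = 0`.
-/

open Filter Topology Finset

lemma ContinuousLinearMap.topologicalClosure_span_le_comap {E E' : Type*}
    [NormedAddCommGroup E] [NormedSpace ℂ E] [NormedAddCommGroup E'] [NormedSpace ℂ E']
    (T : E →L[ℂ] E') {s : Set E} {M : Submodule ℂ E'} (hM : IsClosed (M : Set E'))
    (h : ∀ x ∈ s, T x ∈ M) :
    (Submodule.span ℂ s).topologicalClosure ≤ M.comap (T : E →ₗ[ℂ] E') :=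
  Submodule.topologicalClosure_minimal _ (Submodule.span_le.mpr h) (hM.preimage T.continuous)

lemma eq_zero_of_inner_eq_zero_of_sub_smul_eq {𝕜 E : Type*} [RCLike 𝕜] [NormedAddCommGroup E]
    [InnerProductSpace 𝕜 E] {a g J : E} {w : 𝕜} (hw : ‖w‖ ≤ 1) (hga : ‖g‖ ≤ ‖a‖)
    (horth : inner 𝕜 a J = 0) (h : a - w • g = J) : J = 0 := by
  have hpyth := norm_add_sq_eq_norm_sq_add_norm_sq_of_inner_eq_zero (𝕜 := 𝕜) a (-J)
    (by rw [inner_neg_right, horth, neg_zero])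
  rw [← sub_eq_add_neg, ← h, sub_sub_cancel, norm_neg, h] at hpyth
  have hwg : ‖w • g‖ ≤ ‖a‖ := by
    rw [norm_smul]
    exact (mul_le_of_le_one_left (norm_nonneg g) hw).trans hga
  have : ‖J‖ * ‖J‖ ≤ 0 := by nlinarith [norm_nonneg (w • g)]
  exact norm_eq_zero.mp (mul_self_eq_zero.mp (le_antisymm this (mul_self_nonneg _)))

namespace RKFramework

variable (F : RKFramework Ω H)

lemma eq_of_eqOn_diff_singleton {w : ℂ} {a b : H}
    (h : Set.EqOn (F.ι a) (F.ι b) (Ω \ {w})) : a = b :=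
  F.ι_inj a b <| h.of_subset_closure (F.analytic a).continuousOn (F.analytic b).continuousOn
    Set.sdiff_subset ((dense_compl_singleton w).open_subset_closure_inter F.isOpen)

lemma ι_S_pow (n : ℕ) (x : H) {z : ℂ} (hz : z ∈ Ω) :
    F.ι ((F.S ^ n) x) z = z ^ n * F.ι x z := by
  induction n with
  | zero => simp
  | succ n ih =>
    rw [pow_succ', mul_apply_eq_comp, F.ι_S _ z hz, ih]
    ring

lemma Q_zero_S (x : H) : F.Q 0 (F.S x) = x := by
  refine F.eq_of_eqOn_diff_singleton (w := 0) fun z ⟨hz, hz0⟩ => ?_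
  rw [F.ι_Q 0 F.zero_mem _ z hz hz0, F.ι_S x z hz, F.ι_S x 0 F.zero_mem, zero_mul, sub_zero,
    sub_zero, mul_div_cancel_left₀ _ hz0]

lemma norm_Q_zero_le (hQ : ‖F.Q 0‖ ≤ 1) (x : H) : ‖F.Q 0 x‖ ≤ ‖x‖ := by
  simpa using (F.Q 0).le_of_opNorm_le hQ x

lemma norm_le_norm_S (hQ : ‖F.Q 0‖ ≤ 1) (x : H) : ‖x‖ ≤ ‖F.S x‖ := by
  simpa only [Q_zero_S] using F.norm_Q_zero_le hQ (F.S x)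

lemma S_Q_sub_smul_Q {w : ℂ} (hw : w ∈ Ω) {x : H} (hx : F.ι x w = 0) :
    F.S (F.Q w x) - w • F.Q w x = x := by
  refine F.eq_of_eqOn_diff_singleton (w := w) fun z ⟨hz, hzw⟩ => ?_
  have hsub : z - w ≠ 0 := sub_ne_zero.mpr hzw
  rw [map_sub, map_smul, Pi.sub_apply, Pi.smul_apply, smul_eq_mul, F.ι_S _ z hz,
    F.ι_Q w hw x z hz hzw, hx, sub_zero]
  field_simp

lemma Q_S_pow {w : ℂ} (hw : w ∈ Ω) (n : ℕ) (f : H) :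
    F.Q w ((F.S ^ n) f) = ∑ k ∈ range n, w ^ (n - 1 - k) • (F.S ^ k) f + w ^ n • F.Q w f := by
  refine F.eq_of_eqOn_diff_singleton (w := w) fun z ⟨hz, hzw⟩ => ?_
  have hsub : z - w ≠ 0 := sub_ne_zero.mpr hzw
  have hgeom := geom_sum₂_mul z w n
  have hsum : ∑ k ∈ range n, w ^ (n - 1 - k) * (z ^ k * F.ι f z)
      = (∑ k ∈ range n, z ^ k * w ^ (n - 1 - k)) * F.ι f z := by
    rw [Finset.sum_mul]
    exact Finset.sum_congr rfl fun k _ => by ring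
  simp only [map_add, map_sum, map_smul, Pi.add_apply, Finset.sum_apply, Pi.smul_apply,
    smul_eq_mul, F.ι_Q w hw _ z hz hzw, F.ι_S_pow _ _ hz, F.ι_S_pow _ _ hw, hsum]
  field_simp
  linear_combination (-F.ι f z) * hgeom

variable {F}

lemma ι_zero_eq_zero_of_mem_zspan {f y : H} (hy : y ∈ F.zspan f) : F.ι y 0 = 0 := by
  have hle := (innerSL ℂ (F.k 0)).topologicalClosure_span_le_comap (M := ⊥) isClosed_singleton
    (s := {x | ∃ n : ℕ, 1 ≤ n ∧ x = (F.S ^ n) f}) <| by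
      rintro _ ⟨n, hn, rfl⟩
      rw [Submodule.mem_bot, innerSL_apply_apply, F.reproducing 0 F.zero_mem,
        F.ι_S_pow n f F.zero_mem, zero_pow (by omega), zero_mul]
  simpa [F.reproducing 0 F.zero_mem] using hle hy

lemma S_Q_zero_of_mem_zspan {f x : H} (hx : x ∈ F.zspan f) : F.S (F.Q 0 x) = x := by
  simpa using F.S_Q_sub_smul_Q F.zero_mem (ι_zero_eq_zero_of_mem_zspan hx)

lemma Q_zero_mem_zspan {x : H} (hx : x ∈ F.zspan x) : F.Q 0 x ∈ F.zspan (F.Q 0 x) := by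
  refine (F.Q 0).topologicalClosure_span_le_comap (Submodule.isClosed_topologicalClosure _) ?_ hx
  rintro _ ⟨n, hn, rfl⟩
  have : (F.S ^ n) x = F.S ((F.S ^ n) (F.Q 0 x)) := by
    conv_lhs => rw [← S_Q_zero_of_mem_zspan hx]
    rw [← mul_apply_eq_comp, ← pow_succ, pow_succ', mul_apply_eq_comp]
  rw [this, F.Q_zero_S]
  exact Submodule.le_topologicalClosure _ (Submodule.subset_span ⟨n, hn, rfl⟩)

lemma exists_S_pow_eq (hQ : ‖F.Q 0‖ ≤ 1) (n : ℕ) {x : H} (hx : x ∈ F.zspan x) :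
    ∃ g, ‖g‖ ≤ ‖x‖ ∧ x = (F.S ^ n) g := by
  induction n generalizing x with
  | zero => exact ⟨x, le_rfl, rfl⟩
  | succ n ih =>
    obtain ⟨g, hg, hQx⟩ := ih (Q_zero_mem_zspan hx)
    refine ⟨g, hg.trans (F.norm_Q_zero_le hQ x), ?_⟩
    rw [pow_succ', mul_apply_eq_comp, ← hQx, S_Q_zero_of_mem_zspan hx]

lemma eq_zero_of_mem_zspan_self (hΩ : Ω ⊆ Metric.ball 0 1) (hQ : ‖F.Q 0‖ ≤ 1) {x : H}
    (hx : x ∈ F.zspan x) : x = 0 := by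
  refine F.ι_inj x 0 fun z hz => ?_
  have hz1 : ‖z‖ < 1 := mem_ball_zero_iff.mp (hΩ hz)
  have hbound : ∀ n : ℕ, ‖F.ι x z‖ ≤ ‖z‖ ^ n * (‖F.k z‖ * ‖x‖) := fun n => by
    obtain ⟨g, hg, rfl⟩ := F.exists_S_pow_eq hQ n hx
    rw [F.ι_S_pow n g hz, norm_mul, norm_pow, ← F.reproducing z hz]
    gcongr
    exact (norm_inner_le_norm _ _).trans (by gcongr)
  have hlim : Tendsto (fun n : ℕ => ‖z‖ ^ n * (‖F.k z‖ * ‖x‖)) atTop (𝓝 0) := by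
    simpa using (tendsto_pow_atTop_nhds_zero_of_lt_one (norm_nonneg z) hz1).mul_const
      (‖F.k z‖ * ‖x‖)
  simpa using norm_le_zero_iff.mp (ge_of_tendsto' hlim hbound)

lemma S_pow_mem_fullSpan (n : ℕ) (f : H) : (F.S ^ n) f ∈ F.fullSpan f :=
  Submodule.le_topologicalClosure _ (Submodule.subset_span ⟨n, rfl⟩)

lemma S_mem_zspan {f x : H} (hx : x ∈ F.fullSpan f) : F.S x ∈ F.zspan f := by
  refine F.S.topologicalClosure_span_le_comap (Submodule.isClosed_topologicalClosure _) ?_ hx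
  rintro _ ⟨n, rfl⟩
  rw [← mul_apply_eq_comp, ← pow_succ']
  exact Submodule.le_topologicalClosure _ (Submodule.subset_span ⟨n + 1, by omega, rfl⟩)

lemma Q_mem_fullSpan {w : ℂ} (hw : w ∈ Ω) {f x : H} (hfw : F.ι f w ≠ 0)
    (hx : x ∈ F.fullSpan f) (hxw : F.ι x w = 0) : F.Q w x ∈ F.fullSpan f := by
  let T : H →L[ℂ] H :=
    F.Q w - (F.ι f w)⁻¹ • (innerSL ℂ (F.k w)).smulRight (F.Q w f)
  have hT : ∀ y, T y = F.Q w y - (F.ι y w / F.ι f w) • F.Q w f := fun y => by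
    simp [T, F.reproducing w hw, smul_smul, div_eq_inv_mul]
  have hTS : ∀ n, T ((F.S ^ n) f) ∈ F.fullSpan f := fun n => by
    rw [hT, F.Q_S_pow hw, F.ι_S_pow n f hw, mul_div_cancel_right₀ _ hfw, add_sub_cancel_right]
    exact Submodule.sum_mem _ fun k _ => Submodule.smul_mem _ _ (F.S_pow_mem_fullSpan k f)
  simpa [hT, hxw] using T.topologicalClosure_span_le_comap
    (Submodule.isClosed_topologicalClosure _) (by rintro _ ⟨n, rfl⟩; exact hTS n) hx

lemma J_mem_fullSpan (f : H) : F.J f ∈ F.fullSpan f := by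
  refine Submodule.sub_mem _ (by simpa using F.S_pow_mem_fullSpan 0 f) ?_
  refine Submodule.topologicalClosure_mono (Submodule.span_mono ?_) (SetLike.coe_mem _)
  rintro _ ⟨n, -, rfl⟩
  exact ⟨n, rfl⟩

lemma inner_J_eq_zero {f y : H} (hy : y ∈ F.zspan f) : ⟪y, F.J f⟫ = 0 :=
  Submodule.sub_starProjection_mem_orthogonal (K := F.zspan f) f y hy

lemma mem_zspan_of_J_eq_zero {f : H} (hJ : F.J f = 0) : f ∈ F.zspan f := by
  nth_rewrite 2 [sub_eq_zero.mp hJ]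
  exact SetLike.coe_mem (_ : F.zspan f)

lemma J_eq_zero_of_ι_J_eq_zero (hQ : ‖F.Q 0‖ ≤ 1) {w : ℂ} (hw : w ∈ Ω) (hw1 : ‖w‖ ≤ 1)
    {f : H} (hfw : F.ι f w ≠ 0) (hJw : F.ι (F.J f) w = 0) : F.J f = 0 :=
  have hg : F.Q w (F.J f) ∈ F.fullSpan f := F.Q_mem_fullSpan hw hfw (F.J_mem_fullSpan f) hJw
  eq_zero_of_inner_eq_zero_of_sub_smul_eq hw1 (F.norm_le_norm_S hQ _)
    (F.inner_J_eq_zero (F.S_mem_zspan hg)) (F.S_Q_sub_smul_Q hw hJw)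

end RKFramework

/-- Corollary 5.3: if `Ω = 𝔻` and the backward shift `Q₀` is contractive, then the
`S`-inner function `J` of any nonzero `f` has no extra zeros in `𝔻`. -/
theorem stmt13 (F : RKFramework (Metric.ball (0 : ℂ) 1) H) (hQ : ‖F.Q 0‖ ≤ 1)
    (f : H) (hf : f ≠ 0) (w : ℂ) (hw : w ∈ Metric.ball (0 : ℂ) 1)
    (hJw : F.ι (F.J f) w = 0) : F.ι f w = 0 := by
  by_contra hfw
  have hJ : F.J f = 0 := F.J_eq_zero_of_ι_J_eq_zero hQ hw (mem_ball_zero_iff.mp hw).le hfw hJw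
  exact hf (F.eq_zero_of_mem_zspan_self subset_rfl hQ (F.mem_zspan_of_J_eq_zero hJ))
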